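/- arXiv:1008.1011 — 4 statements merged into one kernel-verified Lean document; each statement's English description precedes it below -/
import Mathlib

section
/- Let G_L ≤ GL(7,ℂ) be the group generated by (12),(23),(34),(67) and the matrix A sending (a,b,c,d,e,f,g) to (a,b,g-c,g-d,1+a+b-f,1+a+b-e,g), and let Σ = ⟨(12),(23),(34),(67)⟩. Then Σ consists precisely of all permutation matrices contained in G_L, and there are exactly six double cosets ΣαΣ in G_L, with representatives I₇, A, [(123)(67)A]², [(123)(67)A]³, [(123)A]³, [(123)(67)A]⁴ and cardinalities 48, 576, 576, 576, 96, 48 respectively. -/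
/-- The permutation matrix corresponding to `σ ∈ S₇`. -/
def pm (σ : Equiv.Perm (Fin 7)) : Matrix (Fin 7) (Fin 7) ℂ :=
  Matrix.of fun i j => if i = σ j then 1 else 0

/-- The 3-cycle `(123)` (on the first three coordinates, `0 ↦ 1 ↦ 2 ↦ 0`). -/
def c123 : Equiv.Perm (Fin 7) := Equiv.swap 0 1 * Equiv.swap 1 2

/-- The matrix `A` sending `(a,b,c,d,e,f,g)` to `(a,b,g-c,g-d,1+a+b-f,1+a+b-e,g)`. -/
noncomputable def Amat : Matrix (Fin 7) (Fin 7) ℂ :=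
  !![1,0,0,0,0,0,0;
     0,1,0,0,0,0,0;
     0,0,-1,0,0,0,1;
     0,0,0,-1,0,0,1;
     0,0,-1,-1,1,0,1;
     0,0,-1,-1,0,1,1;
     0,0,0,0,0,0,1]

/-- `G_L = ⟨(12),(23),(34),(67),A⟩`. -/
noncomputable def GL_L : Submonoid (Matrix (Fin 7) (Fin 7) ℂ) :=
  Submonoid.closure
    {pm (Equiv.swap 0 1), pm (Equiv.swap 1 2), pm (Equiv.swap 2 3), pm (Equiv.swap 5 6), Amat}

/-- `Σ = ⟨(12),(23),(34),(67)⟩`. -/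
noncomputable def SigmaL : Submonoid (Matrix (Fin 7) (Fin 7) ℂ) :=
  Submonoid.closure
    {pm (Equiv.swap 0 1), pm (Equiv.swap 1 2), pm (Equiv.swap 2 3), pm (Equiv.swap 5 6)}

/-- The double coset `Σ α Σ`. -/
noncomputable def dCoset (α : Matrix (Fin 7) (Fin 7) ℂ) : Set (Matrix (Fin 7) (Fin 7) ℂ) :=
  {m | ∃ σ ∈ SigmaL, ∃ τ ∈ SigmaL, m = σ * α * τ}

/-- Representatives `I₇, A, [(123)(67)A]², [(123)(67)A]³, [(123)A]³, [(123)(67)A]⁴`. -/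
noncomputable def reps : Fin 6 → Matrix (Fin 7) (Fin 7) ℂ :=
  ![1, Amat, (pm c123 * pm (Equiv.swap 5 6) * Amat) ^ 2,
     (pm c123 * pm (Equiv.swap 5 6) * Amat) ^ 3,
     (pm c123 * Amat) ^ 3,
     (pm c123 * pm (Equiv.swap 5 6) * Amat) ^ 4]

/-- The corresponding double coset sizes `1·48, 12·48, 12·48, 12·48, 2·48, 1·48`. -/
def dcSizes : Fin 6 → ℕ := ![48, 576, 576, 576, 96, 48]

/-!
Let `Σ × Σ` act on matrices by `(σ, τ) • M = pm σ * M * pm τ⁻¹`, i.e. by permuting rows and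
columns; the double cosets `Σ α Σ` are the orbits. `A` commutes with `(12)` and `(34)`, so
`A Σ α Σ ⊆ ⋃ᵣ Σ (A r α) Σ` over the twelve right cosets `⟨(12), (34)⟩ r` of `Σ`, and for each of
the 72 pairs `(r, αᵢ)` an explicit witness puts `A r αᵢ` into one of the six double cosets. Hence
their union is closed under left multiplication by the generators and equals `G_L`.
The number of zero entries is invariant under the action and takes six different values on
the `αᵢ` (42, 34, 25, 18, 28, 10): this separates the double cosets, and since every permutation
matrix has 42 zeros, a permutation matrix in `G_L` lies in `Σ · 1 · Σ = Σ`. The sizes come from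
the orbit–stabilizer theorem, the stabilizers (of orders 48, 4, 4, 4, 24, 48) being counted by
running through an explicit list of the 48 elements of `Σ`.
-/

open Equiv MulAction

namespace Matrix

variable {m n α : Type*}

instance permProdMulAction : MulAction (Perm m × Perm n) (Matrix m n α) where
  smul p M := M.submatrix ⇑p.1⁻¹ ⇑p.2⁻¹
  one_smul _ := rfl
  mul_smul _ _ _ := rfl

theorem perm_smul_apply (p : Perm m × Perm n) (M : Matrix m n α) (i : m) (j : n) :
    (p • M) i j = M (p.1⁻¹ i) (p.2⁻¹ j) := rfl

theorem eq_of_perm_smul_eq_self_of_injective {M : Matrix m n α} (hM : Function.Injective M)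
    {σ σ' : Perm m} {τ : Perm n} (h : (σ, τ) • M = M) (h' : (σ', τ) • M = M) : σ = σ' := by
  have hrow (i : m) : M (σ⁻¹ i) = M (σ'⁻¹ i) := funext fun j => by
    simpa [perm_smul_apply] using
      (congrFun (congrFun h i) (τ j)).trans (congrFun (congrFun h' i) (τ j)).symm
  exact inv_injective (Equiv.ext fun i => hM (hrow i))

noncomputable def zeroCount [Zero α] (M : Matrix m n α) : ℕ :=
  Nat.card {ij : m × n // M ij.1 ij.2 = 0}

theorem zeroCount_perm_smul [Zero α] (p : Perm m × Perm n) (M : Matrix m n α) :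
    zeroCount (p • M) = zeroCount M :=
  Nat.card_congr <| (Equiv.prodCongr p.1⁻¹ p.2⁻¹).subtypeEquiv fun _ => Iff.rfl

theorem zeroCount_map [Zero α] {β : Type*} [Zero β] {f : α → β} (hf : ∀ a, f a = 0 ↔ a = 0)
    (M : Matrix m n α) : zeroCount (M.map f) = zeroCount M :=
  Nat.card_congr <| Equiv.subtypeEquivRight fun _ => hf _

end Matrix

abbrev Perm2 := Perm (Fin 7) × Perm (Fin 7)

theorem pm_mul_eq_smul (σ : Perm (Fin 7)) (M : Matrix (Fin 7) (Fin 7) ℂ) :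
    pm σ * M = ((σ, 1) : Perm2) • M := by
  ext i j
  simp [pm, Matrix.mul_apply, Matrix.perm_smul_apply, eq_comm (a := i), ← Equiv.eq_symm_apply]

theorem mul_pm_eq_smul (τ : Perm (Fin 7)) (M : Matrix (Fin 7) (Fin 7) ℂ) :
    M * pm τ = ((1, τ⁻¹) : Perm2) • M := by
  ext i j
  simp [pm, Matrix.mul_apply, Matrix.perm_smul_apply]

theorem pm_mul_mul_pm (σ τ : Perm (Fin 7)) (M : Matrix (Fin 7) (Fin 7) ℂ) :
    pm σ * M * pm τ = ((σ, τ⁻¹) : Perm2) • M := by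
  rw [mul_pm_eq_smul, pm_mul_eq_smul, smul_smul]
  rfl

theorem pm_eq_smul_one (σ : Perm (Fin 7)) : pm σ = ((σ, 1) : Perm2) • 1 := by
  rw [← mul_one (pm σ), pm_mul_eq_smul]

theorem pm_mul (σ τ : Perm (Fin 7)) : pm (σ * τ) = pm σ * pm τ := by
  rw [pm_mul_eq_smul, pm_eq_smul_one, pm_eq_smul_one, smul_smul, Prod.mk_mul_mk, one_mul]

theorem pm_one : pm 1 = 1 := by
  rw [pm_eq_smul_one, Prod.mk_one_one, one_smul]

noncomputable def pmHom : Perm (Fin 7) →* Matrix (Fin 7) (Fin 7) ℂ where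
  toFun := pm
  map_one' := pm_one
  map_mul' := pm_mul

theorem pmHom_apply (σ : Perm (Fin 7)) : pmHom σ = pm σ := rfl

def sigmaGens : Set (Perm (Fin 7)) := {swap 0 1, swap 1 2, swap 2 3, swap 5 6}

def sigmaPerm : Subgroup (Perm (Fin 7)) := Subgroup.closure sigmaGens

theorem sigmaGens_subset : sigmaGens ⊆ sigmaPerm := Subgroup.subset_closure

theorem sigmaGens_inv : sigmaGens⁻¹ = sigmaGens := by
  ext g
  simp [sigmaGens]

theorem SigmaL_eq_map : SigmaL = sigmaPerm.toSubmonoid.map pmHom := by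
  rw [sigmaPerm, Subgroup.closure_toSubmonoid, sigmaGens_inv, Set.union_self,
    MonoidHom.map_mclosure, SigmaL]
  simp [sigmaGens, Set.image_insert_eq, pmHom]

theorem mem_SigmaL {M : Matrix (Fin 7) (Fin 7) ℂ} : M ∈ SigmaL ↔ ∃ σ ∈ sigmaPerm, pm σ = M := by
  rw [SigmaL_eq_map]
  exact Submonoid.mem_map

abbrev sigma2 : Subgroup Perm2 := sigmaPerm.prod sigmaPerm

theorem dCoset_eq_orbit (α : Matrix (Fin 7) (Fin 7) ℂ) : dCoset α = orbit sigma2 α := by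
  ext M
  simp only [dCoset, mem_SigmaL, Set.mem_ofPred_eq, mem_orbit_iff, Subtype.exists,
    Subgroup.mk_smul, Prod.exists, Subgroup.mem_prod]
  constructor
  · rintro ⟨_, ⟨σ, hσ, rfl⟩, _, ⟨τ, hτ, rfl⟩, rfl⟩
    exact ⟨σ, τ⁻¹, ⟨hσ, inv_mem hτ⟩, (pm_mul_mul_pm σ τ α).symm⟩
  · rintro ⟨σ, τ, ⟨hσ, hτ⟩, rfl⟩
    exact ⟨_, ⟨σ, hσ, rfl⟩, _, ⟨τ⁻¹, inv_mem hτ, rfl⟩, by rw [pm_mul_mul_pm, inv_inv]⟩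

-- Representatives of the right cosets of `⟨(12), (34)⟩`, a subgroup of `Σ` commuting with `A`.
def cosetRep (r : Fin 12) : Perm (Fin 7) :=
  ![1, swap 1 2, swap 1 2 * swap 0 1, swap 1 2 * swap 2 3, swap 1 2 * swap 0 1 * swap 2 3,
    swap 1 2 * swap 0 1 * swap 2 3 * swap 1 2] ⟨r.val % 6, by omega⟩ * swap 5 6 ^ (r.val / 6)

def sigmaEnum (k : Fin 48) : Perm (Fin 7) :=
  swap 0 1 ^ (k.val % 2) * swap 2 3 ^ (k.val / 2 % 2) * cosetRep ⟨k.val / 4, by omega⟩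

theorem sigmaEnum_injective : Function.Injective sigmaEnum := by decide +kernel

theorem sigmaEnum_mul_closed :
    ∀ t : Fin 4, ∀ k, ∃ k',
      ![swap 0 1, swap 1 2, swap 2 3, swap 5 6] t * sigmaEnum k = sigmaEnum k' := by
  decide +kernel

theorem sigmaEnum_mem (k : Fin 48) : sigmaEnum k ∈ sigmaPerm := by
  have h01 : swap 0 1 ∈ sigmaPerm := sigmaGens_subset (by simp [sigmaGens])
  have h12 : swap 1 2 ∈ sigmaPerm := sigmaGens_subset (by simp [sigmaGens])
  have h23 : swap 2 3 ∈ sigmaPerm := sigmaGens_subset (by simp [sigmaGens])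
  have h56 : swap 5 6 ∈ sigmaPerm := sigmaGens_subset (by simp [sigmaGens])
  have hrep : ∀ r, cosetRep r ∈ sigmaPerm := by
    intro r
    refine mul_mem ?_ (pow_mem h56 _)
    generalize (⟨r.val % 6, _⟩ : Fin 6) = c
    fin_cases c <;> simp only [Fin.zero_eta, Fin.isValue, Fin.mk_one, Fin.reduceFinMk,
      Matrix.cons_val] <;>
      repeat' first | exact one_mem _ | exact h01 | exact h12 | exact h23 | apply mul_mem
  exact mul_mem (mul_mem (pow_mem h01 _) (pow_mem h23 _)) (hrep _)

theorem mul_sigmaEnum_mem_range {g : Perm (Fin 7)} (hg : g ∈ sigmaGens) (k : Fin 48) :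
    g * sigmaEnum k ∈ Set.range sigmaEnum := by
  have ⟨t, ht⟩ : ∃ t, ![swap 0 1, swap 1 2, swap 2 3, swap 5 6] t = g := by
    simpa [sigmaGens, Fin.exists_fin_succ, eq_comm] using hg
  obtain ⟨k', hk'⟩ := sigmaEnum_mul_closed t k
  exact ⟨k', by rw [← hk', ht]⟩

theorem range_sigmaEnum : Set.range sigmaEnum = sigmaPerm := by
  refine subset_antisymm (Set.range_subset_iff.2 sigmaEnum_mem) fun σ hσ => ?_
  induction hσ using Subgroup.closure_induction_left with
  | one => exact ⟨0, by decide⟩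
  | mul_left g hg _ _ ih =>
    obtain ⟨k, rfl⟩ := ih
    exact mul_sigmaEnum_mem_range hg k
  | inv_mul_cancel g hg _ _ ih =>
    obtain ⟨k, rfl⟩ := ih
    exact mul_sigmaEnum_mem_range (by rwa [← Set.mem_inv, sigmaGens_inv]) k

theorem card_sigmaPerm : Nat.card sigmaPerm = 48 := by
  rw [← SetLike.coe_sort_coe, ← range_sigmaEnum, Nat.card_range_of_injective sigmaEnum_injective,
    Nat.card_eq_fintype_card, Fintype.card_fin]

noncomputable def toC : Matrix (Fin 7) (Fin 7) ℤ →+* Matrix (Fin 7) (Fin 7) ℂ :=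
  (Int.castRingHom ℂ).mapMatrix

theorem toC_injective : Function.Injective toC := Matrix.map_injective Int.cast_injective

theorem toC_smul (p : Perm2) (M : Matrix (Fin 7) (Fin 7) ℤ) : toC (p • M) = p • toC M := rfl

theorem pm_eq_toC (σ : Perm (Fin 7)) : pm σ = toC (((σ, 1) : Perm2) • 1) := by
  rw [toC_smul, map_one, pm_eq_smul_one]

def AmatZ : Matrix (Fin 7) (Fin 7) ℤ :=
  !![1,0,0,0,0,0,0;
     0,1,0,0,0,0,0;
     0,0,-1,0,0,0,1;
     0,0,0,-1,0,0,1;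
     0,0,-1,-1,1,0,1;
     0,0,-1,-1,0,1,1;
     0,0,0,0,0,0,1]

theorem Amat_eq_toC : Amat = toC AmatZ := by
  ext i j
  fin_cases i <;> fin_cases j <;> simp [Amat, AmatZ, toC]

def repsZ : Fin 6 → Matrix (Fin 7) (Fin 7) ℤ :=
  ![!![1,0,0,0,0,0,0;
       0,1,0,0,0,0,0;
       0,0,1,0,0,0,0;
       0,0,0,1,0,0,0;
       0,0,0,0,1,0,0;
       0,0,0,0,0,1,0;
       0,0,0,0,0,0,1],
    !![1,0,0,0,0,0,0;
       0,1,0,0,0,0,0;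
       0,0,-1,0,0,0,1;
       0,0,0,-1,0,0,1;
       0,0,-1,-1,1,0,1;
       0,0,-1,-1,0,1,1;
       0,0,0,0,0,0,1],
    !![0,-1,-1,-1,0,1,1;
       0,0,-1,0,0,0,1;
       1,0,0,0,0,0,0;
       0,0,-1,0,0,1,0;
       0,-1,-2,-1,1,1,1;
       0,0,-1,-1,0,1,1;
       0,-1,-1,0,0,1,1],
    !![-1,-1,-1,0,0,1,1;
       0,-1,-1,-1,0,1,1;
       0,0,-1,0,0,0,1;
       0,-1,0,0,0,0,1;
       -1,-2,-2,-1,1,1,2;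
       0,-1,-1,0,0,1,1;
       -1,-1,-1,-1,0,1,2],
    !![-1,0,0,0,0,0,1;
       0,-1,0,0,0,0,1;
       0,0,-1,0,0,0,1;
       0,0,0,-1,0,0,1;
       -1,-1,-1,-1,1,0,2;
       -1,-1,-1,-1,0,1,2;
       0,0,0,0,0,0,1],
    !![-1,-1,0,-1,0,1,1;
       -1,-1,-1,0,0,1,1;
       0,-1,-1,-1,0,1,1;
       -1,0,-1,-1,0,1,1;
       -2,-2,-2,-2,1,2,2;
       -1,-1,-1,-1,0,1,2;
       -1,-1,-1,-1,0,2,1]]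

theorem reps_eq_toC (i : Fin 6) : reps i = toC (repsZ i) := by
  fin_cases i <;>
    simp only [reps, pm_eq_toC, Amat_eq_toC, ← map_mul, ← map_pow, Fin.zero_eta, Fin.isValue,
      Fin.mk_one, Fin.reduceFinMk, Matrix.cons_val, ← map_one toC] <;>
    congr 1 <;> decide +kernel

theorem mem_orbit_sigma2 {M α : Matrix (Fin 7) (Fin 7) ℂ} :
    M ∈ orbit sigma2 α ↔ ∃ g ∈ sigma2, g • α = M := by
  simp [mem_orbit_iff, Subgroup.smul_def]

theorem smul_mem_orbit_sigma2 {g : Perm2} (hg : g ∈ sigma2) {M α : Matrix (Fin 7) (Fin 7) ℂ}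
    (hM : M ∈ orbit sigma2 α) : g • M ∈ orbit sigma2 α := by
  obtain ⟨h, hh, rfl⟩ := mem_orbit_sigma2.1 hM
  exact mem_orbit_sigma2.2 ⟨g * h, mul_mem hg hh, mul_smul g h α⟩

theorem Amat_commute_pm_swap (t : Fin 2) : Commute Amat (pm (![swap 0 1, swap 2 3] t)) := by
  rw [Commute, SemiconjBy, Amat_eq_toC, pm_eq_toC, ← map_mul, ← map_mul]
  congr 1
  revert t
  decide +kernel

theorem Amat_mul_pm_sigmaEnum (k : Fin 48) :
    Amat * pm (sigmaEnum k) = pm (swap 0 1 ^ (k.val % 2) * swap 2 3 ^ (k.val / 2 % 2)) *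
      (Amat * pm (cosetRep ⟨k.val / 4, by omega⟩)) := by
  have hcomm : Commute Amat (pm (swap 0 1 ^ (k.val % 2) * swap 2 3 ^ (k.val / 2 % 2))) := by
    rw [← pmHom_apply, map_mul, map_pow, map_pow]
    exact ((Amat_commute_pm_swap 0).pow_right _).mul_right ((Amat_commute_pm_swap 1).pow_right _)
  rw [sigmaEnum, pm_mul, ← mul_assoc, hcomm.eq, mul_assoc]

-- Found by computer search.
def coverCert : Fin 12 → Fin 6 → Fin 6 × Fin 48 × Fin 48 :=
  ![![(1, 0, 0), (0, 0, 0), (3, 28, 19), (5, 0, 41), (1, 20, 20), (3, 0, 35)],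
    ![(1, 0, 4), (1, 6, 14), (2, 4, 28), (3, 6, 1), (1, 20, 7), (3, 0, 26)],
    ![(1, 0, 5), (1, 6, 15), (1, 29, 14), (3, 6, 15), (1, 20, 6), (3, 0, 24)],
    ![(1, 0, 6), (1, 6, 12), (3, 30, 43), (3, 6, 8), (1, 20, 5), (3, 0, 27)],
    ![(1, 0, 7), (1, 6, 13), (2, 18, 19), (3, 6, 21), (1, 20, 4), (3, 0, 25)],
    ![(1, 0, 20), (4, 0, 20), (1, 28, 38), (4, 24, 17), (1, 20, 0), (3, 0, 39)],
    ![(1, 0, 24), (1, 24, 26), (3, 28, 15), (3, 24, 28), (3, 20, 11), (3, 0, 11)],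
    ![(1, 0, 28), (2, 9, 14), (2, 4, 36), (2, 0, 19), (3, 20, 22), (3, 0, 2)],
    ![(1, 0, 29), (2, 9, 15), (1, 29, 0), (2, 0, 0), (3, 20, 23), (3, 0, 0)],
    ![(1, 0, 30), (2, 9, 12), (3, 30, 39), (2, 0, 23), (3, 20, 20), (3, 0, 3)],
    ![(1, 0, 31), (2, 9, 13), (2, 18, 15), (2, 0, 4), (3, 20, 21), (3, 0, 1)],
    ![(1, 0, 44), (3, 44, 14), (1, 28, 24), (1, 44, 14), (3, 20, 15), (3, 0, 15)]]

theorem coverCert_spec : ∀ r i, AmatZ * (((cosetRep r, 1) : Perm2) • repsZ i) =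
    ((sigmaEnum (coverCert r i).2.1, sigmaEnum (coverCert r i).2.2) : Perm2) •
      repsZ (coverCert r i).1 := by
  decide +kernel

theorem Amat_mul_pm_cosetRep_mul_mem (r : Fin 12) (i : Fin 6) :
    Amat * (pm (cosetRep r) * reps i) ∈ orbit sigma2 (reps (coverCert r i).1) := by
  rw [pm_mul_eq_smul, reps_eq_toC i, ← toC_smul, Amat_eq_toC, ← map_mul, coverCert_spec,
    toC_smul, ← reps_eq_toC]
  exact mem_orbit_sigma2.2 ⟨_, ⟨sigmaEnum_mem _, sigmaEnum_mem _⟩, rfl⟩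

theorem pm_mul_mem_iUnion_orbit {σ : Perm (Fin 7)} (hσ : σ ∈ sigmaPerm)
    {M : Matrix (Fin 7) (Fin 7) ℂ} (hM : M ∈ ⋃ i, orbit sigma2 (reps i)) :
    pm σ * M ∈ ⋃ i, orbit sigma2 (reps i) := by
  obtain ⟨i, hi⟩ := Set.mem_iUnion.1 hM
  rw [pm_mul_eq_smul]
  exact Set.mem_iUnion.2 ⟨i, smul_mem_orbit_sigma2 ⟨hσ, one_mem _⟩ hi⟩

theorem Amat_mul_mem_iUnion_orbit {M : Matrix (Fin 7) (Fin 7) ℂ}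
    (hM : M ∈ ⋃ i, orbit sigma2 (reps i)) : Amat * M ∈ ⋃ i, orbit sigma2 (reps i) := by
  obtain ⟨i, hi⟩ := Set.mem_iUnion.1 hM
  obtain ⟨⟨u, v⟩, ⟨hu, hv⟩, rfl⟩ := mem_orbit_sigma2.1 hi
  change u ∈ (sigmaPerm : Set (Perm (Fin 7))) at hu
  rw [← range_sigmaEnum] at hu
  obtain ⟨k, rfl⟩ := hu
  have hw : ((swap 0 1 ^ (k.val % 2) * swap 2 3 ^ (k.val / 2 % 2), v) : Perm2) ∈ sigma2 :=
    ⟨mul_mem (pow_mem (sigmaGens_subset (by simp [sigmaGens])) _)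
      (pow_mem (sigmaGens_subset (by simp [sigmaGens])) _), hv⟩
  have key : Amat * ((sigmaEnum k, v) • reps i) =
      ((swap 0 1 ^ (k.val % 2) * swap 2 3 ^ (k.val / 2 % 2), v) : Perm2) •
        (Amat * (pm (cosetRep ⟨k.val / 4, by omega⟩) * reps i)) := by
    rw [← inv_inv v, ← pm_mul_mul_pm, ← pm_mul_mul_pm, ← mul_assoc, ← mul_assoc,
      Amat_mul_pm_sigmaEnum]
    simp only [mul_assoc]
  rw [key]
  exact Set.mem_iUnion_of_mem _
    (smul_mem_orbit_sigma2 hw (Amat_mul_pm_cosetRep_mul_mem ⟨k.val / 4, by omega⟩ i))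

theorem GL_L_subset_iUnion_orbit :
    (GL_L : Set (Matrix (Fin 7) (Fin 7) ℂ)) ⊆ ⋃ i, orbit sigma2 (reps i) := by
  intro M hM
  induction hM using Submonoid.closure_induction_left with
  | one => exact Set.mem_iUnion.2 ⟨0, mem_orbit_self _⟩
  | mul_left g hg N _ ih =>
    rcases hg with rfl | rfl | rfl | rfl | rfl
    iterate 4 exact pm_mul_mem_iUnion_orbit (sigmaGens_subset (by simp [sigmaGens])) ih
    exact Amat_mul_mem_iUnion_orbit ih

theorem SigmaL_le_GL_L : SigmaL ≤ GL_L :=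
  Submonoid.closure_mono fun _ hg => by
    simp only [Set.mem_insert_iff, Set.mem_singleton_iff] at hg ⊢
    tauto

theorem reps_mem_GL_L (i : Fin 6) : reps i ∈ GL_L := by
  have gen : ∀ g ∈ ({pm (swap 0 1), pm (swap 1 2), pm (swap 2 3), pm (swap 5 6), Amat} :
      Set (Matrix (Fin 7) (Fin 7) ℂ)), g ∈ GL_L := fun _ hg => Submonoid.subset_closure hg
  have hc : pm c123 ∈ GL_L := by
    rw [c123, pm_mul]
    exact mul_mem (gen _ (by simp)) (gen _ (by simp))
  have h56 : pm (swap 5 6) ∈ GL_L := gen _ (by simp)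
  have hA : Amat ∈ GL_L := gen _ (by simp)
  fin_cases i
  · exact one_mem _
  · exact hA
  all_goals exact pow_mem (by first | exact mul_mem (mul_mem hc h56) hA | exact mul_mem hc hA) _

theorem orbit_reps_subset_GL_L (i : Fin 6) :
    orbit sigma2 (reps i) ⊆ (GL_L : Set (Matrix (Fin 7) (Fin 7) ℂ)) := by
  intro M hM
  obtain ⟨⟨u, v⟩, ⟨hu, hv⟩, rfl⟩ := mem_orbit_sigma2.1 hM
  rw [← inv_inv v, ← pm_mul_mul_pm]
  have hpm {σ : Perm (Fin 7)} (hσ : σ ∈ sigmaPerm) : pm σ ∈ GL_L :=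
    SigmaL_le_GL_L (mem_SigmaL.2 ⟨σ, hσ, rfl⟩)
  exact mul_mem (mul_mem (hpm hu) (reps_mem_GL_L i)) (hpm (inv_mem hv))

theorem iUnion_orbit_reps :
    ⋃ i, orbit sigma2 (reps i) = (GL_L : Set (Matrix (Fin 7) (Fin 7) ℂ)) :=
  subset_antisymm (Set.iUnion_subset orbit_reps_subset_GL_L) GL_L_subset_iUnion_orbit

theorem zeroCount_eq_of_mem_orbit {M α : Matrix (Fin 7) (Fin 7) ℂ} (hM : M ∈ orbit sigma2 α) :
    Matrix.zeroCount M = Matrix.zeroCount α := by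
  obtain ⟨g, -, rfl⟩ := mem_orbit_sigma2.1 hM
  exact Matrix.zeroCount_perm_smul g α

theorem zeroCount_reps (i : Fin 6) : Matrix.zeroCount (reps i) = ![42, 34, 25, 18, 28, 10] i := by
  rw [reps_eq_toC, toC, RingHom.mapMatrix_apply, Matrix.zeroCount_map (by simp),
    Matrix.zeroCount, Nat.card_eq_fintype_card]
  revert i
  decide +kernel

theorem zeroCount_reps_injective : Function.Injective fun i => Matrix.zeroCount (reps i) := by
  intro i j h
  simp only [zeroCount_reps] at h
  revert i j
  decide

theorem disjoint_orbit_reps {i j : Fin 6} (hij : i ≠ j) :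
    Disjoint (orbit sigma2 (reps i)) (orbit sigma2 (reps j)) :=
  Set.disjoint_left.2 fun _ hi hj => hij <| zeroCount_reps_injective <|
    (zeroCount_eq_of_mem_orbit hi).symm.trans (zeroCount_eq_of_mem_orbit hj)

theorem reps_zero : reps 0 = 1 := rfl

theorem mem_GL_L_and_pm_iff {M : Matrix (Fin 7) (Fin 7) ℂ} :
    (M ∈ GL_L ∧ ∃ σ, M = pm σ) ↔ M ∈ SigmaL := by
  constructor
  · rintro ⟨hM, σ, rfl⟩
    rw [← SetLike.mem_coe, ← iUnion_orbit_reps, Set.mem_iUnion] at hM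
    obtain ⟨i, hi⟩ := hM
    obtain rfl : i = 0 := by
      have h := zeroCount_eq_of_mem_orbit hi
      rw [pm_eq_smul_one, Matrix.zeroCount_perm_smul, ← reps_zero] at h
      exact zeroCount_reps_injective h.symm
    obtain ⟨⟨u, v⟩, ⟨hu, hv⟩, h⟩ := mem_orbit_sigma2.1 hi
    rw [← inv_inv v, ← pm_mul_mul_pm, reps_zero, mul_one, ← pm_mul] at h
    exact mem_SigmaL.2 ⟨_, mul_mem hu (inv_mem hv), h⟩
  · intro hM
    obtain ⟨σ, -, rfl⟩ := mem_SigmaL.1 hM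
    exact ⟨SigmaL_le_GL_L hM, σ, rfl⟩

theorem Nat.card_subtype_prod_eq_card_exists {α β : Type*} {Q : α → β → Prop}
    (hQ : ∀ a a' b, Q a b → Q a' b → a = a') :
    Nat.card {p : α × β // Q p.1 p.2} = Nat.card {b : β // ∃ a, Q a b} :=
  Nat.card_congr <| Equiv.ofBijective (fun p => ⟨p.1.2, p.1.1, p.2⟩)
    ⟨fun p q h => by
      obtain ⟨⟨a, b⟩, hp⟩ := p
      obtain ⟨⟨a', b'⟩, hq⟩ := q
      obtain rfl : b = b' := congrArg Subtype.val h
      obtain rfl := hQ a a' b hp hq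
      rfl,
    fun ⟨b, a, h⟩ => ⟨⟨(a, b), h⟩, rfl⟩⟩

theorem sigmaPerm_le_stabilizer : sigmaPerm ≤ stabilizer (Perm (Fin 7)) (4 : Fin 7) := by
  refine Subgroup.closure_le _ |>.2 fun g hg => ?_
  simp only [sigmaGens, Set.mem_insert_iff, Set.mem_singleton_iff] at hg
  rcases hg with rfl | rfl | rfl | rfl <;> rfl

noncomputable def sigmaEquiv : Fin 48 ≃ sigmaPerm :=
  Equiv.ofBijective (fun k => ⟨sigmaEnum k, sigmaEnum_mem k⟩)
    ⟨fun _ _ h => sigmaEnum_injective (congrArg Subtype.val h), fun ⟨σ, hσ⟩ => by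
      rw [← SetLike.mem_coe, ← range_sigmaEnum] at hσ
      obtain ⟨k, rfl⟩ := hσ
      exact ⟨k, rfl⟩⟩

theorem repsZ_injective (i : Fin 6) : Function.Injective (repsZ i) := by
  have h : ∀ i : Fin 6, ∀ p : Fin 7 × Fin 7, p.1 = p.2 ∨ ∃ j, repsZ i p.1 j ≠ repsZ i p.2 j := by
    decide +kernel
  exact fun a b hab => (h i (a, b)).resolve_right fun ⟨j, hj⟩ => hj (congrFun hab j)

-- The first conjunct follows from the second because `Σ` fixes `4`; it only prunes the search.
theorem card_stabilizer_pruned : ∀ i, Fintype.card {b : Fin 48 //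
    (∀ j, repsZ i 4 ((sigmaEnum b)⁻¹ j) = repsZ i 4 j) ∧
      ∃ a, ((sigmaEnum a, sigmaEnum b) : Perm2) • repsZ i = repsZ i} =
    ![48, 4, 4, 4, 24, 48] i := by
  decide +kernel

theorem card_stabilizer_reps (i : Fin 6) :
    Nat.card (stabilizer sigma2 (reps i)) = ![48, 4, 4, 4, 24, 48] i := by
  let e : Fin 48 × Fin 48 ≃ sigma2 :=
    (sigmaEquiv.prodCongr sigmaEquiv).trans (Subgroup.prodEquiv sigmaPerm sigmaPerm).toEquiv.symm
  have hstab : Nat.card (stabilizer sigma2 (reps i)) = Nat.card {p : Fin 48 × Fin 48 //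
      ((sigmaEnum p.1, sigmaEnum p.2) : Perm2) • repsZ i = repsZ i} := by
    refine Nat.card_congr ((Equiv.subtypeEquivRight fun _ => mem_stabilizer_iff).trans
      (e.subtypeEquiv fun p => ?_).symm)
    rw [reps_eq_toC, Subgroup.smul_def, ← toC_smul, toC_injective.eq_iff]
    rfl
  have hfix (a : Fin 48) : (sigmaEnum a)⁻¹ 4 = 4 :=
    mem_stabilizer_iff.1 (sigmaPerm_le_stabilizer (inv_mem (sigmaEnum_mem a)))
  rw [hstab, Nat.card_subtype_prod_eq_card_exists
    (Q := fun a b => ((sigmaEnum a, sigmaEnum b) : Perm2) • repsZ i = repsZ i)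
    fun a a' b h h' => sigmaEnum_injective
      (Matrix.eq_of_perm_smul_eq_self_of_injective (repsZ_injective i) h h'),
    ← card_stabilizer_pruned i, ← Nat.card_eq_fintype_card]
  refine Nat.card_congr (Equiv.subtypeEquivRight fun b => ⟨fun h => ⟨fun j => ?_, h⟩, And.right⟩)
  obtain ⟨a, ha⟩ := h
  simpa [Matrix.perm_smul_apply, hfix] using congrFun (congrFun ha 4) j

theorem MulAction.natCard_orbit_mul_natCard_stabilizer {G X : Type*} [Group G] [MulAction G X]
    (x : X) : Nat.card (orbit G x) * Nat.card (stabilizer G x) = Nat.card G := by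
  rw [Nat.card_coe_set_eq, ← index_stabilizer, Subgroup.index_mul_card]

theorem card_sigma2 : Nat.card sigma2 = 48 * 48 := by
  rw [Nat.card_congr (Subgroup.prodEquiv sigmaPerm sigmaPerm).toEquiv, Nat.card_prod,
    card_sigmaPerm]

theorem card_dCoset_reps (i : Fin 6) : Nat.card (dCoset (reps i)) = dcSizes i := by
  have h := natCard_orbit_mul_natCard_stabilizer (G := sigma2) (reps i)
  rw [card_stabilizer_reps, card_sigma2] at h
  rw [dCoset_eq_orbit]
  fin_cases i <;> simp [dcSizes] at h ⊢ <;> omega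

theorem double_coset_decomposition :
    -- Σ consists precisely of the permutation matrices in G_L
    {m | m ∈ GL_L ∧ ∃ σ : Equiv.Perm (Fin 7), m = pm σ} = (SigmaL : Set (Matrix (Fin 7) (Fin 7) ℂ)) ∧
    -- the six double cosets are pairwise disjoint and exhaust G_L
    (∀ i j : Fin 6, i ≠ j → Disjoint (dCoset (reps i)) (dCoset (reps j))) ∧
    (⋃ i : Fin 6, dCoset (reps i)) = (GL_L : Set (Matrix (Fin 7) (Fin 7) ℂ)) ∧
    -- with the stated cardinalities
    (∀ i : Fin 6, Nat.card (dCoset (reps i)) = dcSizes i) := by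
  refine ⟨Set.ext fun _ => mem_GL_L_and_pm_iff, fun i j hij => ?_, ?_, card_dCoset_reps⟩
  · rw [dCoset_eq_orbit, dCoset_eq_orbit]
    exact disjoint_orbit_reps hij
  · simp_rw [dCoset_eq_orbit]
    exact iUnion_orbit_reps
end

section
/- Let n be a nonnegative integer and let b,c,d,e,f,g ∈ ℂ with e+f+g-b-c-d+n = 1, and assume none of e, f, g, 1-n+b-f, 1-n+b-e is a nonpositive integer. Then the terminating Saalschützian series satisfy Bailey's identity: Σ_{k=0}^{n} [(-n)_k (b)_k (c)_k (d)_k] / [k! (e)_k (f)_k (g)_k] = [(e-b)_n (f-b)_n / ((e)_n (f)_n)] · Σ_{k=0}^{n} [(-n)_k (b)_k (g-c)_k (g-d)_k] / [k! (1-n+b-f)_k (1-n+b-e)_k (g)_k], where (x)_k denotes the rising factorial x(x+1)···(x+k-1). -/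
/-- The rising factorial `(x)_k = x(x+1)⋯(x+k-1)`. -/
noncomputable def rf (x : ℂ) (k : ℕ) : ℂ := ∏ i ∈ Finset.range k, (x + i)

/-- `z` is not a nonpositive integer. -/
def notNonposInt (z : ℂ) : Prop := ∀ m : ℕ, z ≠ -(m : ℂ)

/-!
Multiplying by `(e)_n (f)_n (g)_n` turns Bailey's identity into a polynomial identity in the
parameters. On its left side, expand `(c)_k (d)_k` by the Pfaff–Saalschütz summation with
parameters `g - c, g - d; g`. After interchanging the two summations, every inner sum is again a
balanced Pfaff–Saalschütz sum; it collapses to `(e - b)_{n-j} (f - b)_{n-j}`, which gives the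
right side. Pfaff–Saalschütz itself, in a form without denominators, follows by induction on `n`
from a three-term recurrence of its summands.
-/

open Finset Nat

@[simp] lemma rf_zero (x : ℂ) : rf x 0 = 1 := by simp [rf]

lemma rf_succ (x : ℂ) (k : ℕ) : rf x (k + 1) = rf x k * (x + k) := prod_range_succ _ _

lemma rf_add (x : ℂ) (m k : ℕ) : rf x (m + k) = rf x m * rf (x + m) k := by
  simp only [rf, prod_range_add, Nat.cast_add, add_assoc]

lemma rf_succ' (x : ℂ) (k : ℕ) : rf x (k + 1) = x * rf (x + 1) k := by
  rw [add_comm k, rf_add]; simp [rf]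

lemma rf_eq_mul_rf_of_le (x : ℂ) {k n : ℕ} (hk : k ≤ n) :
    rf x n = rf x k * rf (x + k) (n - k) := by
  rw [← rf_add, Nat.add_sub_cancel' hk]

lemma rf_reflect {x y : ℂ} {M : ℕ} (h : x + y + M = 1) : rf y M = (-1) ^ M * rf x M := by
  induction M generalizing y with
  | zero => simp
  | succ M ih =>
    rw [rf_succ', ih (by push_cast at h; linear_combination h), rf_succ, pow_succ]
    push_cast at h
    linear_combination ((-1) ^ M * rf x M) * h

lemma rf_ne_zero {x : ℂ} (hx : notNonposInt x) (k : ℕ) : rf x k ≠ 0 :=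
  prod_ne_zero_iff.mpr fun i _ h => hx i (by linear_combination h)

lemma rf_neg_natCast (n k : ℕ) : rf (-n) k = (-1) ^ k * k ! * n.choose k := by
  have h : rf (-n) k = ∏ i ∈ range k, -((n : ℂ) - i) := prod_congr rfl fun i _ => by ring
  rw [h, prod_neg, card_range, ← descPochhammer_eval_eq_prod_range,
    descPochhammer_eval_eq_descFactorial, descFactorial_eq_factorial_mul_choose]
  push_cast; ring

/-- `(c)_n (c - a - b)_n` times the `k`-th term of `₃F₂(-n, a, b; c, 1 + a + b - c - n; 1)`. -/
noncomputable def saalschutzTerm (a b c : ℂ) (n k : ℕ) : ℂ :=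
  n.choose k * rf a k * rf b k * rf (c - a - b) (n - k) * rf (c + k) (n - k)

section Saalschutz

variable (a b c : ℂ) (n : ℕ)

lemma saalschutzTerm_succ_zero :
    saalschutzTerm a b c (n + 1) 0 = (c + n) * (c - a - b + n) * saalschutzTerm a b c n 0 := by
  simp only [saalschutzTerm, choose_zero_right, Nat.sub_zero, rf_succ, CharP.cast_eq_zero,
    add_zero]
  ring

lemma saalschutzTerm_succ_succ {k : ℕ} (hk : k ≤ n) :
    saalschutzTerm a b c (n + 1) (k + 1)
      = (c + n + (k + 1 : ℕ)) * (c - a - b + n - (k + 1 : ℕ)) * saalschutzTerm a b c n (k + 1)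
        + (a + k) * (b + k) * saalschutzTerm a b c n k := by
  obtain ⟨m, rfl⟩ := Nat.exists_eq_add_of_le hk
  rcases m with _ | m
  · simp [saalschutzTerm, rf_succ]
    ring
  · have hratio : ((k + (m + 1)).choose (k + 1) : ℂ) * (k + 1)
        = (k + (m + 1)).choose k * (m + 1) := by
      have := Nat.choose_succ_right_eq (k + (m + 1)) k
      rw [Nat.add_sub_cancel_left] at this
      exact_mod_cast this
    simp only [saalschutzTerm]
    rw [show k + (m + 1) + 1 - (k + 1) = m + 1 by omega, show k + (m + 1) - (k + 1) = m by omega,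
      Nat.add_sub_cancel_left, Nat.choose_succ_succ' (k + (m + 1)) k, rf_succ a, rf_succ b,
      rf_succ (c - a - b) m, rf_succ (c + _) m, rf_succ' (c + k)]
    push_cast [← add_assoc]
    linear_combination (-rf a k * rf b k * (a + k) * (b + k) * rf (c - a - b) m * (c - a - b + m)
      * rf (c + k + 1) m) * hratio

end Saalschutz

theorem sum_saalschutzTerm (a b c : ℂ) (n : ℕ) :
    ∑ k ∈ range (n + 1), saalschutzTerm a b c n k = rf (c - a) n * rf (c - b) n := by
  induction n with
  | zero => simp [saalschutzTerm]
  | succ n ih =>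
    set T := saalschutzTerm a b c n
    set w : ℕ → ℂ := fun k => (c + n + k) * (c - a - b + n - k)
    -- `(c + n + k) (c - a - b + n - k) + (a + k) (b + k) = (c - a + n) (c - b + n)`
    have hlast : T (n + 1) = 0 := by simp [T, saalschutzTerm]
    calc ∑ k ∈ range (n + 2), saalschutzTerm a b c (n + 1) k
        = ∑ k ∈ range (n + 2), w k * T k
            + ∑ k ∈ range (n + 1), (a + k) * (b + k) * T k := by
          rw [sum_range_succ', sum_range_succ' (fun k => w k * T k), add_right_comm,
            ← sum_add_distrib, saalschutzTerm_succ_zero]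
          congr 1
          · exact sum_congr rfl fun k hk =>
              saalschutzTerm_succ_succ a b c n (Nat.lt_succ_iff.mp (mem_range.mp hk))
          · simp [w, T]
      _ = ∑ k ∈ range (n + 1), (c - a + n) * (c - b + n) * T k := by
          rw [sum_range_succ, hlast, mul_zero, add_zero, ← sum_add_distrib]
          exact sum_congr rfl fun k _ => by ring
      _ = rf (c - a) (n + 1) * rf (c - b) (n + 1) := by
          rw [← mul_sum, ih, rf_succ, rf_succ]; ring

theorem sum_neg_one_pow_saalschutz (N : ℕ) (A B C D : ℂ) (h : C + D = 1 + A + B - N) :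
    ∑ m ∈ range (N + 1), (-1) ^ m * N.choose m * rf A m * rf B m
        * rf (C + m) (N - m) * rf (D + m) (N - m)
      = (-1) ^ N * (rf (C - A) N * rf (C - B) N) := by
  rw [← sum_saalschutzTerm, mul_sum]
  refine sum_congr rfl fun m hm => ?_
  have hm : m ≤ N := Nat.lt_succ_iff.mp (mem_range.mp hm)
  have hreflect : rf (D + m) (N - m) = (-1) ^ (N - m) * rf (C - A - B) (N - m) :=
    rf_reflect (by rw [Nat.cast_sub hm]; linear_combination h)
  have hsign : ((-1 : ℂ)) ^ m * (-1) ^ (N - m) = (-1) ^ N := by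
    rw [← pow_add, Nat.add_sub_cancel' hm]
  rw [hreflect, saalschutzTerm, ← hsign]
  ring

theorem bailey_inner_sum (n j : ℕ) (hj : j ≤ n) (b c d e f g : ℂ)
    (hsaal : e + f + g - b - c - d + n = 1) :
    ∑ m ∈ range (n - j + 1), (-1) ^ (j + m) * n.choose (j + m) * rf b (j + m)
        * saalschutzTerm (g - c) (g - d) g (j + m) j
        * rf (e + (j + m : ℕ)) (n - (j + m)) * rf (f + (j + m : ℕ)) (n - (j + m))
        * rf (g + (j + m : ℕ)) (n - (j + m))
      = (-1) ^ j * n.choose j * rf b j * rf (g - c) j * rf (g - d) j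
        * rf (e - b) (n - j) * rf (f - b) (n - j) * rf (g + j) (n - j) := by
  set P := (-1) ^ j * n.choose j * rf b j * rf (g - c) j * rf (g - d) j * rf (g + j) (n - j)
  have hfactor : ∀ m ∈ range (n - j + 1),
      (-1) ^ (j + m) * n.choose (j + m) * rf b (j + m)
        * saalschutzTerm (g - c) (g - d) g (j + m) j
        * rf (e + (j + m : ℕ)) (n - (j + m)) * rf (f + (j + m : ℕ)) (n - (j + m))
        * rf (g + (j + m : ℕ)) (n - (j + m))
      = P * ((-1) ^ m * (n - j).choose m * rf (b + j) m * rf (c + d - g) m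
          * rf (e + j + m) (n - j - m) * rf (f + j + m) (n - j - m)) := by
    intro m hm
    have hm : m ≤ n - j := Nat.lt_succ_iff.mp (mem_range.mp hm)
    have hchoose : (n.choose (j + m) : ℂ) * (j + m).choose j = n.choose j * (n - j).choose m := by
      have := Nat.choose_mul (n := n) (Nat.le_add_right j m)
      rw [Nat.add_sub_cancel_left] at this
      exact_mod_cast this
    simp only [P, saalschutzTerm, Nat.add_sub_cancel_left, ← Nat.sub_sub,
      show g - (g - c) - (g - d) = c + d - g by ring]
    rw [rf_add b, rf_eq_mul_rf_of_le (g + j) hm, pow_add]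
    push_cast [← add_assoc]
    linear_combination ((-1) ^ j * (-1) ^ m * rf b j * rf (b + j) m * rf (g - c) j * rf (g - d) j
      * rf (c + d - g) m * rf (g + j) m * rf (g + j + m) (n - j - m)
      * rf (e + j + m) (n - j - m) * rf (f + j + m) (n - j - m)) * hchoose
  have hbalanced : e + j + (f + j) = 1 + (b + j) + (c + d - g) - (n - j : ℕ) := by
    rw [Nat.cast_sub hj]; linear_combination hsaal
  have hreflect : rf (e + j - (c + d - g)) (n - j) = (-1) ^ (n - j) * rf (f - b) (n - j) :=
    rf_reflect (by rw [Nat.cast_sub hj]; linear_combination hsaal)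
  have hsq : ((-1 : ℂ)) ^ (n - j) * (-1) ^ (n - j) = 1 := by rw [← mul_pow]; norm_num
  rw [sum_congr rfl hfactor, ← mul_sum, sum_neg_one_pow_saalschutz _ _ _ _ _ hbalanced,
    hreflect, add_sub_add_right_eq_sub]
  linear_combination P * rf (e - b) (n - j) * rf (f - b) (n - j) * hsq

theorem bailey_identity_cleared (n : ℕ) (b c d e f g : ℂ)
    (hsaal : e + f + g - b - c - d + n = 1) :
    ∑ k ∈ range (n + 1), (-1) ^ k * n.choose k * rf b k * rf c k * rf d k
        * rf (e + k) (n - k) * rf (f + k) (n - k) * rf (g + k) (n - k)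
      = ∑ j ∈ range (n + 1), (-1) ^ j * n.choose j * rf b j * rf (g - c) j * rf (g - d) j
        * rf (e - b) (n - j) * rf (f - b) (n - j) * rf (g + j) (n - j) := by
  set G : ℕ → ℕ → ℂ := fun k j => (-1) ^ k * n.choose k * rf b k
    * saalschutzTerm (g - c) (g - d) g k j * rf (e + k) (n - k) * rf (f + k) (n - k)
    * rf (g + k) (n - k)
  have hexpand (k : ℕ) :
      rf c k * rf d k = ∑ j ∈ range (k + 1), saalschutzTerm (g - c) (g - d) g k j := by
    rw [sum_saalschutzTerm, sub_sub_cancel, sub_sub_cancel]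
  calc _ = ∑ k ∈ range (n + 1), ∑ j ∈ range (k + 1), G (j + (k - j)) j := by
        refine sum_congr rfl fun k _ => ?_
        have hterm : ∀ j ∈ range (k + 1), G (j + (k - j)) j = (-1) ^ k * n.choose k * rf b k
            * rf (e + k) (n - k) * rf (f + k) (n - k) * rf (g + k) (n - k)
            * saalschutzTerm (g - c) (g - d) g k j := fun j hj => by
          rw [Nat.add_sub_cancel' (Nat.lt_succ_iff.mp (mem_range.mp hj))]
          ring
        rw [sum_congr rfl hterm, ← mul_sum, ← hexpand]
        ring
    _ = ∑ j ∈ range (n + 1), ∑ m ∈ range (n + 1 - j), G (j + m) j :=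
        sum_range_diag_flip (n + 1) fun j m => G (j + m) j
    _ = _ := by
        refine sum_congr rfl fun j hj => ?_
        have hj : j ≤ n := Nat.lt_succ_iff.mp (mem_range.mp hj)
        rw [Nat.sub_add_comm hj]
        exact bailey_inner_sum n j hj b c d e f g hsaal

lemma rf_neg_natCast_div_factorial (n k : ℕ) : rf (-n) k / k ! = (-1) ^ k * n.choose k := by
  rw [rf_neg_natCast, mul_right_comm,
    mul_div_cancel_right₀ _ (Nat.cast_ne_zero.mpr k.factorial_ne_zero)]

lemma rf_div_rf {x : ℂ} {k n : ℕ} (hk : k ≤ n) (hx : rf x k ≠ 0) :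
    rf x n / rf x k = rf (x + k) (n - k) := by
  rw [rf_eq_mul_rf_of_le x hk, mul_div_cancel_left₀ _ hx]

lemma rf_div_rf_of_add_eq {x y : ℂ} {k n : ℕ} (hk : k ≤ n) (hxy : x + y = 1 - n)
    (hy : rf y k ≠ 0) : rf x n / rf y k = (-1) ^ k * rf x (n - k) := by
  have hreflect : rf (x + (n - k : ℕ)) k = (-1) ^ k * rf y k :=
    rf_reflect (by rw [Nat.cast_sub hk]; linear_combination hxy)
  rw [rf_eq_mul_rf_of_le x (Nat.sub_le n k), Nat.sub_sub_self hk, hreflect]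
  field_simp

/-- Bailey's identity for terminating Saalschützian `₄F₃(1)` series. -/
theorem bailey_identity (n : ℕ) (b c d e f g : ℂ)
    (hsaal : e + f + g - b - c - d + n = 1)
    (he : notNonposInt e) (hf : notNonposInt f) (hg : notNonposInt g)
    (hf' : notNonposInt (1 - n + b - f)) (he' : notNonposInt (1 - n + b - e)) :
    (∑ k ∈ Finset.range (n + 1),
        rf (-(n : ℂ)) k * rf b k * rf c k * rf d k /
          ((k.factorial : ℂ) * rf e k * rf f k * rf g k))
      = rf (e - b) n * rf (f - b) n / (rf e n * rf f n) *
        ∑ k ∈ Finset.range (n + 1),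
          rf (-(n : ℂ)) k * rf b k * rf (g - c) k * rf (g - d) k /
            ((k.factorial : ℂ) * rf (1 - n + b - f) k * rf (1 - n + b - e) k * rf g k) := by
  have hE := rf_ne_zero he n
  have hF := rf_ne_zero hf n
  refine mul_right_cancel₀ (mul_ne_zero (mul_ne_zero hE hF) (rf_ne_zero hg n)) ?_
  rw [sum_mul, show ∀ A S : ℂ, A / (rf e n * rf f n) * S * (rf e n * rf f n * rf g n)
      = A * rf g n * S from fun A S => by field_simp, mul_sum]
  convert bailey_identity_cleared n b c d e f g hsaal using 1 <;>
    refine sum_congr rfl fun k hk => ?_ <;>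
    have hk : k ≤ n := Nat.lt_succ_iff.mp (mem_range.mp hk)
  · calc _ = rf (-n) k / k ! * rf b k * rf c k * rf d k * (rf e n / rf e k)
          * (rf f n / rf f k) * (rf g n / rf g k) := by ring
      _ = _ := by
        rw [rf_neg_natCast_div_factorial, rf_div_rf hk (rf_ne_zero he k),
          rf_div_rf hk (rf_ne_zero hf k), rf_div_rf hk (rf_ne_zero hg k)]
  · calc _ = rf (-n) k / k ! * rf b k * rf (g - c) k * rf (g - d) k
          * (rf (e - b) n / rf (1 - n + b - e) k) * (rf (f - b) n / rf (1 - n + b - f) k)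
          * (rf g n / rf g k) := by ring
      _ = _ := by
        rw [rf_neg_natCast_div_factorial, rf_div_rf hk (rf_ne_zero hg k),
          rf_div_rf_of_add_eq hk (by ring) (rf_ne_zero he' k),
          rf_div_rf_of_add_eq hk (by ring) (rf_ne_zero hf' k)]
        have hsign : ((-1 : ℂ)) ^ k * (-1) ^ k = 1 := by rw [← mul_pow]; norm_num
        linear_combination (-1) ^ k * n.choose k * rf b k * rf (g - c) k * rf (g - d) k
          * rf (e - b) (n - k) * rf (f - b) (n - k) * rf (g + k) (n - k) * hsign
end

section
/- Let α,β,γ,δ ∈ ℂ with none of α+γ, α+δ, β+γ, β+δ a nonpositive integer, and suppose the real parts of α,β,γ,δ are all positive (so that the integration contour can be taken to be the imaginary axis). Then Barnes' lemma holds: (1/(2πi)) ∫_{-i∞}^{i∞} Γ(α+t)Γ(β+t)Γ(γ-t)Γ(δ-t) dt = Γ(α+γ)Γ(α+δ)Γ(β+γ)Γ(β+δ) / Γ(α+β+γ+δ). -/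
/-!
The substitution `x = t / (1 - t)` turns the Beta integral into the Mellin transform
`∫₀^∞ x^(s-1) (1 + x)^(-c) dx = Γ(s) Γ(c - s) / Γ(c)`. For `f x = x^(γ-1) (1 + x)^(-(α+γ))` and
`g x = x^β (1 + x)^(-(β+δ))` the Mellin transforms of `f` at `1 - iy` and of `g` at `iy` multiply
to Barnes' integrand divided by `Γ(α+γ) Γ(β+δ)`, while `f g` is of the same shape and integrates to
`Γ(β+γ) Γ(α+δ) / Γ(α+β+γ+δ)`. Writing `g` by Mellin inversion on the line `Re s = 0` and exchanging
the two integrals (legitimate because `|Γ(a + iy)| = O(1 / |y|)`) gives the identity.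
-/

open Complex MeasureTheory

open Set

lemma notNonposInt_of_re_pos {z : ℂ} (hz : 0 < z.re) : notNonposInt z := fun m h => by
  have := congrArg re h
  simp only [neg_re, natCast_re] at this
  linarith [m.cast_nonneg (α := ℝ)]

lemma continuous_Gamma_comp {f : ℝ → ℂ} (hf : Continuous f) (hre : ∀ y, 0 < (f y).re) :
    Continuous fun y => Gamma (f y) :=
  continuous_iff_continuousAt.2 fun y =>
    (continuousAt_Gamma _ (notNonposInt_of_re_pos (hre y))).comp hf.continuousAt

lemma norm_Gamma_le_Gamma_re {z : ℂ} (hz : 0 < z.re) : ‖Gamma z‖ ≤ Real.Gamma z.re := by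
  rw [Gamma_eq_integral hz, Real.Gamma_eq_integral hz, GammaIntegral]
  refine (norm_integral_le_integral_norm _).trans_eq
    (setIntegral_congr_fun measurableSet_Ioi fun x hx => ?_)
  simp [norm_cpow_eq_rpow_re_of_pos hx, norm_exp]

/-- `Γ(z) = Γ(z + 1) / z` and `Γ(z + 1)` is bounded on the vertical line, so `Γ` decays like
`1 / |Im z|` there. -/
lemma exists_norm_Gamma_add_mul_I_le {a : ℂ} (ha : 0 < a.re) :
    ∃ C, ∀ y : ℝ, ‖Gamma (a + y * I)‖ ≤ C * (1 + |y|)⁻¹ := by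
  set K := (1 + ‖a‖) / a.re + 1
  refine ⟨Real.Gamma (a.re + 1) * K, fun y => ?_⟩
  set z := a + y * I
  have hzre : z.re = a.re := by simp [z]
  have hz : 0 < ‖z‖ := lt_of_lt_of_le (hzre ▸ ha) (re_le_norm z)
  have hy : 1 + |y| ≤ K * ‖z‖ := by
    have hyz : |y| ≤ ‖z‖ + ‖a‖ :=
      calc |y| = ‖z - a‖ := by simp [z]
        _ ≤ ‖z‖ + ‖a‖ := norm_sub_le z a
    have haz : 1 + ‖a‖ ≤ (1 + ‖a‖) / a.re * ‖z‖ := by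
      rw [div_mul_eq_mul_div, le_div_iff₀ ha]
      exact mul_le_mul_of_nonneg_left (hzre ▸ re_le_norm z) (by positivity)
    linarith
  have hnum : ‖Gamma (z + 1)‖ ≤ Real.Gamma (a.re + 1) := by
    simpa [hzre] using norm_Gamma_le_Gamma_re (z := z + 1) (by simp [hzre]; linarith)
  have hrec : ‖Gamma z‖ * ‖z‖ = ‖Gamma (z + 1)‖ := by
    rw [Gamma_add_one z (norm_pos_iff.1 hz), norm_mul, mul_comm]
  rw [← div_eq_mul_inv, le_div_iff₀ (by positivity)]
  calc ‖Gamma z‖ * (1 + |y|) ≤ ‖Gamma z‖ * (K * ‖z‖) := by gcongr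
    _ = K * ‖Gamma (z + 1)‖ := by rw [← hrec]; ring
    _ ≤ K * Real.Gamma (a.re + 1) := by gcongr
    _ = _ := mul_comm _ _

theorem integrable_Gamma_mul_Gamma {a b : ℂ} (ha : 0 < a.re) (hb : 0 < b.re) :
    Integrable fun y : ℝ => Gamma (a + y * I) * Gamma (b - y * I) := by
  obtain ⟨A, hA⟩ := exists_norm_Gamma_add_mul_I_le ha
  obtain ⟨B, hB⟩ := exists_norm_Gamma_add_mul_I_le hb
  have hcont : Continuous fun y : ℝ => Gamma (a + y * I) * Gamma (b - y * I) :=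
    (continuous_Gamma_comp (by fun_prop) fun y => by simpa using ha).mul
      (continuous_Gamma_comp (by fun_prop) fun y => by simpa using hb)
  refine (integrable_inv_one_add_sq.const_mul (A * B)).mono' hcont.aestronglyMeasurable
    (Filter.Eventually.of_forall fun y => ?_)
  have hB' : ‖Gamma (b - y * I)‖ ≤ B * (1 + |y|)⁻¹ := by
    simpa [sub_eq_add_neg] using hB (-y)
  calc ‖Gamma (a + y * I) * Gamma (b - y * I)‖
      ≤ (A * (1 + |y|)⁻¹) * (B * (1 + |y|)⁻¹) := by
        rw [norm_mul]
        exact mul_le_mul (hA y) hB' (norm_nonneg _) ((norm_nonneg _).trans (hA y))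
    _ = A * B * ((1 + |y|) ^ 2)⁻¹ := by rw [← inv_pow]; ring
    _ ≤ A * B * (1 + y ^ 2)⁻¹ := by
        have hA0 : 0 ≤ A := by simpa using (norm_nonneg _).trans (hA 0)
        have hB0 : 0 ≤ B := by simpa using (norm_nonneg _).trans (hB 0)
        gcongr
        nlinarith [abs_nonneg y, sq_abs y]

lemma hasDerivWithinAt_div_one_sub {t : ℝ} (ht : t ∈ Ioo (0 : ℝ) 1) :
    HasDerivWithinAt (fun t : ℝ => t / (1 - t)) ((1 - t) ^ 2)⁻¹ (Ioo 0 1) t := by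
  have h1t : (1 : ℝ) - t ≠ 0 := by linarith [ht.2]
  have h : HasDerivAt (fun t : ℝ => t / (1 - t)) ((1 * (1 - t) - t * (0 - 1)) / (1 - t) ^ 2) t :=
    (hasDerivAt_id t).div ((hasDerivAt_const t 1).sub (hasDerivAt_id t)) h1t
  rw [show ((1 - t) ^ 2)⁻¹ = (1 * (1 - t) - t * (0 - 1)) / (1 - t) ^ 2 by ring]
  exact h.hasDerivWithinAt

lemma image_div_one_sub_Ioo : (fun t : ℝ => t / (1 - t)) '' Ioo 0 1 = Ioi 0 := by
  ext x
  simp only [mem_image, mem_Ioo, mem_Ioi]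
  constructor
  · rintro ⟨t, ⟨ht0, ht1⟩, rfl⟩
    exact div_pos ht0 (by linarith)
  · intro hx
    refine ⟨x / (1 + x), ⟨by positivity, (div_lt_one (by linarith)).2 (by linarith)⟩, ?_⟩
    field_simp
    ring

lemma injOn_div_one_sub : InjOn (fun t : ℝ => t / (1 - t)) (Ioo 0 1) := by
  rintro t₁ ⟨-, h₁⟩ t₂ ⟨-, h₂⟩ h
  have : (1 : ℝ) - t₁ ≠ 0 := by linarith
  have : (1 : ℝ) - t₂ ≠ 0 := by linarith
  field_simp at h
  linarith

/-- The change of variables `x = t / (1 - t)` in the Mellin integral of `(1 + x) ^ (-(u + v))`. -/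
lemma abs_deriv_smul_cpow_one_add_cpow (u v : ℂ) {t : ℝ} (ht : t ∈ Ioo (0 : ℝ) 1) :
    |((1 - t) ^ 2)⁻¹| •
        (((t / (1 - t) : ℝ) : ℂ) ^ (u - 1) * (1 + ((t / (1 - t) : ℝ) : ℂ)) ^ (-(u + v)))
      = (t : ℂ) ^ (u - 1) * (1 - (t : ℂ)) ^ (v - 1) := by
  obtain ⟨ht0, ht1⟩ := ht
  have hr : (0 : ℝ) < 1 - t := by linarith
  have hrc : ((1 - t : ℝ) : ℂ) ≠ 0 := ofReal_ne_zero.2 hr.ne'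
  have hone : 1 + ((t / (1 - t) : ℝ) : ℂ) = (((1 - t : ℝ) : ℂ))⁻¹ := by
    have : 1 - (t : ℂ) ≠ 0 := by exact_mod_cast hr.ne'
    push_cast
    field_simp
    ring
  have hsq : ((|((1 - t) ^ 2)⁻¹| : ℝ) : ℂ) = ((1 - t : ℝ) : ℂ) ^ (-2 : ℂ) := by
    rw [abs_of_pos (by positivity), cpow_neg, cpow_ofNat]
    push_cast
    ring
  rw [hone, ofReal_div, div_cpow_ofReal_nonneg ht0.le hr.le, inv_cpow_ofReal_nonneg hr.le,
    cpow_neg, inv_inv, real_smul, hsq, show 1 - (t : ℂ) = ((1 - t : ℝ) : ℂ) by push_cast; ring]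
  have hexp : ((1 - t : ℝ) : ℂ) ^ (v - 1) = ((1 - t : ℝ) : ℂ) ^ (-2 : ℂ) *
      (((1 - t : ℝ) : ℂ) ^ (u - 1))⁻¹ * ((1 - t : ℝ) : ℂ) ^ (u + v) := by
    rw [← cpow_neg, ← cpow_add _ _ hrc, ← cpow_add _ _ hrc]
    ring_nf
  rw [hexp]
  ring

theorem hasMellin_one_add_cpow_neg {u v : ℂ} (hu : 0 < u.re) (hv : 0 < v.re) :
    HasMellin (fun x : ℝ => (1 + (x : ℂ)) ^ (-(u + v))) u (Gamma u * Gamma v / Gamma (u + v)) := by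
  have hbeta : IntegrableOn (fun t : ℝ => (t : ℂ) ^ (u - 1) * (1 - (t : ℂ)) ^ (v - 1)) (Ioo 0 1) :=
    ((intervalIntegrable_iff_integrableOn_Ioc_of_le zero_le_one).1
      (betaIntegral_convergent hu hv)).mono_set Ioo_subset_Ioc_self
  simp only [HasMellin, MellinConvergent, mellin, smul_eq_mul]
  rw [← image_div_one_sub_Ioo,
    integrableOn_image_iff_integrableOn_abs_deriv_smul measurableSet_Ioo
      (fun t ht => hasDerivWithinAt_div_one_sub ht) injOn_div_one_sub,
    integral_image_eq_integral_abs_deriv_smul measurableSet_Ioo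
      (fun t ht => hasDerivWithinAt_div_one_sub ht) injOn_div_one_sub,
    integrableOn_congr_fun (fun t ht => abs_deriv_smul_cpow_one_add_cpow u v ht) measurableSet_Ioo,
    setIntegral_congr_fun measurableSet_Ioo (fun t ht => abs_deriv_smul_cpow_one_add_cpow u v ht),
    ← betaIntegral_eq_Gamma_mul_div u v hu hv, betaIntegral,
    intervalIntegral.integral_of_le zero_le_one, integral_Ioc_eq_integral_Ioo]
  exact ⟨hbeta, rfl⟩

theorem hasMellin_cpow_mul_one_add_cpow_neg {a c s u v : ℂ} (hu : 0 < u.re) (hv : 0 < v.re)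
    (hs : s + a = u) (hc : u + v = c) :
    HasMellin (fun x : ℝ => (x : ℂ) ^ a * (1 + (x : ℂ)) ^ (-c)) s
      (Gamma u * Gamma v / Gamma c) := by
  subst hs hc
  obtain ⟨hconv, hval⟩ := hasMellin_one_add_cpow_neg hu hv
  exact ⟨MellinConvergent.cpow_smul.2 hconv, (mellin_cpow_smul _ _ _).trans hval⟩

lemma continuousOn_cpow_mul_one_add_cpow (a c : ℂ) :
    ContinuousOn (fun x : ℝ => (x : ℂ) ^ a * (1 + (x : ℂ)) ^ (-c)) (Ioi 0) := fun x hx =>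
  ((continuousAt_ofReal_cpow_const x a (Or.inr (ne_of_gt hx))).mul
    ((by fun_prop : ContinuousAt (fun x : ℝ => 1 + (x : ℂ)) x).cpow continuousAt_const
      (mem_slitPlane_iff.2 (Or.inl (by simp; linarith [hx.out]))))).continuousWithinAt

lemma MellinConvergent.aestronglyMeasurable {f : ℝ → ℂ} {s : ℂ} (hf : MellinConvergent f s) :
    AEStronglyMeasurable f (volume.restrict (Ioi 0)) := by
  have hm : Measurable fun t : ℝ => (t : ℂ) ^ (1 - s) := by fun_prop
  refine (hm.aestronglyMeasurable.smul (Integrable.aestronglyMeasurable hf)).congr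
    ((ae_restrict_mem measurableSet_Ioi).mono fun t ht => ?_)
  change (t : ℂ) ^ (1 - s) • ((t : ℂ) ^ (s - 1) • f t) = f t
  rw [smul_smul, ← cpow_add _ _ (ofReal_ne_zero.2 (ne_of_gt ht))]
  simp

theorem integral_mul_eq_mellin_mul {f g : ℝ → ℂ} {σ : ℝ} (hf : MellinConvergent f (1 - σ))
    (hg : MellinConvergent g σ) (hMg : VerticalIntegrable (mellin g) σ)
    (hgc : ContinuousOn g (Ioi 0)) :
    ∫ x in Ioi 0, f x * g x
      = (1 / (2 * Real.pi) : ℝ) • ∫ y : ℝ, mellin f (1 - σ - y * I) * mellin g (σ + y * I) := by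
  set Φ : ℝ → ℝ → ℂ := fun x y => f x * ((x : ℂ) ^ (-(σ + y * I)) * mellin g (σ + y * I))
  have hΦ : Integrable (Function.uncurry Φ) ((volume.restrict (Ioi 0)).prod volume) := by
    refine (hf.norm.mul_prod hMg.norm).mono' ?_ ?_
    · have hcpow : Measurable fun p : ℝ × ℝ => (p.1 : ℂ) ^ (-(σ + p.2 * I)) := by fun_prop
      exact hf.aestronglyMeasurable.comp_fst.mul
        (hcpow.aestronglyMeasurable.mul hMg.aestronglyMeasurable.comp_snd)
    · refine Measure.quasiMeasurePreserving_fst.ae (ae_restrict_mem measurableSet_Ioi) |>.mono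
        fun p hp => le_of_eq ?_
      simp [Φ, Function.uncurry, norm_cpow_eq_rpow_re_of_pos hp]
      ring
  calc ∫ x in Ioi 0, f x * g x
      = ∫ x in Ioi 0, (1 / (2 * Real.pi) : ℝ) • ∫ y, Φ x y := by
        refine setIntegral_congr_fun measurableSet_Ioi fun x hx => ?_
        rw [← mellinInv_mellin_eq σ g hx hg hMg (hgc.continuousAt (Ioi_mem_nhds hx)), mellinInv,
          mul_smul_comm, ← integral_const_mul]
        rfl
    _ = (1 / (2 * Real.pi) : ℝ) • ∫ y, ∫ x in Ioi 0, Φ x y := by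
        rw [integral_smul, integral_integral_swap hΦ]
    _ = _ := by
        congr 1
        refine integral_congr_ae (Filter.Eventually.of_forall fun y => ?_)
        simp only [Φ, mellin, ← integral_mul_const]
        refine integral_congr_ae (Filter.Eventually.of_forall fun x => ?_)
        simp only [smul_eq_mul, show (1 : ℂ) - σ - y * I - 1 = -(σ + y * I) by ring]
        ring

theorem integral_Gamma_mul_Gamma_mul_Gamma_mul_Gamma {α β γ δ : ℂ} (hα : 0 < α.re)
    (hβ : 0 < β.re) (hγ : 0 < γ.re) (hδ : 0 < δ.re) :
    ∫ y : ℝ, Gamma (α + y * I) * Gamma (β + y * I) * Gamma (γ - y * I) * Gamma (δ - y * I)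
      = 2 * Real.pi * (Gamma (α + γ) * Gamma (α + δ) * Gamma (β + γ) * Gamma (β + δ) /
          Gamma (α + β + γ + δ)) := by
  set f : ℝ → ℂ := fun x => (x : ℂ) ^ (γ - 1) * (1 + (x : ℂ)) ^ (-(α + γ))
  set g : ℝ → ℂ := fun x => (x : ℂ) ^ β * (1 + (x : ℂ)) ^ (-(β + δ))
  have hMf (y : ℝ) : HasMellin f (1 - (0 : ℝ) - y * I)
      (Gamma (γ - y * I) * Gamma (α + y * I) / Gamma (α + γ)) :=
    hasMellin_cpow_mul_one_add_cpow_neg (by simpa using hγ) (by simpa using hα)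
      (by push_cast; ring) (by ring)
  have hMg (y : ℝ) : HasMellin g ((0 : ℝ) + y * I)
      (Gamma (β + y * I) * Gamma (δ - y * I) / Gamma (β + δ)) :=
    hasMellin_cpow_mul_one_add_cpow_neg (by simpa using hβ) (by simpa using hδ)
      (by push_cast; ring) (by ring)
  have hfg : ∫ x in Ioi 0, f x * g x
      = Gamma (β + γ) * Gamma (α + δ) / Gamma (α + β + γ + δ) := by
    rw [← (hasMellin_cpow_mul_one_add_cpow_neg (a := β + γ - 1) (s := 1) (u := β + γ)
      (v := α + δ) (by simpa using add_pos hβ hγ) (by simpa using add_pos hα hδ) (by ring)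
      (by ring)).2, mellin]
    refine setIntegral_congr_fun measurableSet_Ioi fun x hx => ?_
    have hx0 : (x : ℂ) ≠ 0 := ofReal_ne_zero.2 (ne_of_gt hx)
    have hx1 : 1 + (x : ℂ) ≠ 0 := by
      rw [← ofReal_one, ← ofReal_add]; exact ofReal_ne_zero.2 (by linarith [hx.out])
    simp only [f, g, sub_self, cpow_zero, one_smul]
    rw [show β + γ - 1 = γ - 1 + β by ring, show -(α + β + γ + δ) = -(α + γ) + -(β + δ) by ring,
      cpow_add _ _ hx0, cpow_add _ _ hx1]
    ring
  have hvert : VerticalIntegrable (mellin g) 0 := by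
    simpa only [VerticalIntegrable, (hMg _).2] using
      (integrable_Gamma_mul_Gamma hβ hδ).div_const (Gamma (β + δ))
  have hparseval := integral_mul_eq_mellin_mul (σ := 0) (by simpa using (hMf 0).1)
    (by simpa using (hMg 0).1) hvert (continuousOn_cpow_mul_one_add_cpow β (β + δ))
  simp only [hfg, (hMf _).2, (hMg _).2, real_smul] at hparseval
  have hπ : (Real.pi : ℂ) ≠ 0 := ofReal_ne_zero.2 Real.pi_ne_zero
  have hαγ : Gamma (α + γ) ≠ 0 := Gamma_ne_zero_of_re_pos (by simpa using add_pos hα hγ)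
  have hβδ : Gamma (β + δ) ≠ 0 := Gamma_ne_zero_of_re_pos (by simpa using add_pos hβ hδ)
  calc _ = Gamma (α + γ) * Gamma (β + δ) * ∫ y : ℝ, Gamma (γ - y * I) * Gamma (α + y * I) /
          Gamma (α + γ) * (Gamma (β + y * I) * Gamma (δ - y * I) / Gamma (β + δ)) := by
        rw [← integral_const_mul]
        congr 1 with y
        field_simp
    _ = Gamma (α + γ) * Gamma (β + δ) *
          (2 * Real.pi * (Gamma (β + γ) * Gamma (α + δ) / Gamma (α + β + γ + δ))) := by
        push_cast at hparseval
        rw [hparseval, ← mul_assoc (2 * (Real.pi : ℂ)),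
          mul_one_div_cancel (mul_ne_zero two_ne_zero hπ), one_mul]
    _ = _ := by ring

theorem barnes_lemma_general (α β γ δ : ℂ)
    (hα : 0 < α.re) (hβ : 0 < β.re) (hγ : 0 < γ.re) (hδ : 0 < δ.re) :
    (1 / (2 * ↑Real.pi * Complex.I)) *
        ∫ y : ℝ, Complex.I *
          (Gamma (α + Complex.I * y) * Gamma (β + Complex.I * y) *
            Gamma (γ - Complex.I * y) * Gamma (δ - Complex.I * y))
      = Gamma (α + γ) * Gamma (α + δ) * Gamma (β + γ) * Gamma (β + δ) /
          Gamma (α + β + γ + δ) := by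
  have hπ : (Real.pi : ℂ) ≠ 0 := ofReal_ne_zero.2 Real.pi_ne_zero
  simp_rw [integral_const_mul, fun y : ℝ => mul_comm I (y : ℂ),
    integral_Gamma_mul_Gamma_mul_Gamma_mul_Gamma hα hβ hγ hδ]
  field_simp

/-- Barnes' lemma: `(1/(2πi)) ∫_{-i∞}^{i∞} Γ(α+t)Γ(β+t)Γ(γ-t)Γ(δ-t) dt
= Γ(α+γ)Γ(α+δ)Γ(β+γ)Γ(β+δ)/Γ(α+β+γ+δ)`, the contour being the imaginary
axis (parameterized as `t = iy`, `y ∈ ℝ`). -/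
theorem barnes_lemma (α β γ δ : ℂ)
    (hα : 0 < α.re) (hβ : 0 < β.re) (hγ : 0 < γ.re) (hδ : 0 < δ.re)
    (h1 : notNonposInt (α + γ)) (h2 : notNonposInt (α + δ))
    (h3 : notNonposInt (β + γ)) (h4 : notNonposInt (β + δ)) :
    (1 / (2 * ↑Real.pi * Complex.I)) *
        ∫ y : ℝ, Complex.I *
          (Gamma (α + Complex.I * y) * Gamma (β + Complex.I * y) *
            Gamma (γ - Complex.I * y) * Gamma (δ - Complex.I * y))
      = Gamma (α + γ) * Gamma (α + δ) * Gamma (β + γ) * Gamma (β + δ) /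
          Gamma (α + β + γ + δ) :=
  barnes_lemma_general α β γ δ hα hβ hγ hδ
end

section
/- Let A ∈ GL(7,ℂ) be the matrix sending (a,b,c,d,e,f,g) to (a,b,g-c,g-d,1+a+b-f,1+a+b-e,g), and let P = (123)(67) be the corresponding 7×7 permutation matrix. Then the matrix [(123)(67)A]⁴ represents the transformation (a,b,c,d,e,f,g) ↦ (1+c-e, 1+d-e, 1+a-e, 1+b-e, 2-e, 1+g-e, 1+f-e) up to a permutation of the first four output coordinates and of the last two output coordinates; in particular, ([(123)(67)A]⁴)² ∈ Σ = ⟨(12),(23),(34),(67)⟩. -/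
/-- `B = [(123)(67)A]⁴`. -/
noncomputable def Bmat : Matrix (Fin 7) (Fin 7) ℂ :=
  (pm c123 * pm (Equiv.swap 5 6) * Amat) ^ 4

/-- The linear functional `s(a,b,c,d,e,f,g) = e+f+g-a-b-c-d`. -/
def sfun (x : Fin 7 → ℂ) : ℂ := x 4 + x 5 + x 6 - x 0 - x 1 - x 2 - x 3

/-- The transformation `(a,b,c,d,e,f,g) ↦ (1+c-e,1+d-e,1+a-e,1+b-e,2-e,1+g-e,1+f-e)`. -/
def Tmap (x : Fin 7 → ℂ) : Fin 7 → ℂ :=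
  ![1 + x 2 - x 4, 1 + x 3 - x 4, 1 + x 0 - x 4, 1 + x 1 - x 4,
    2 - x 4, 1 + x 6 - x 4, 1 + x 5 - x 4]

/-! The product `(123)(67)A` has integer entries, so its fourth power can be computed exactly
over `ℤ` by kernel evaluation and transported to `ℂ` along `Int.castRingHom`. The resulting
matrix is an involution, and it is the homogenization of `Tmap` with respect to `sfun`: each
constant of `Tmap` appears multiplied by `sfun x`, which equals `1` on the Saalschützian
hyperplane. Hence `σ = 1` works. -/

open Matrix

def pmInt (σ : Equiv.Perm (Fin 7)) : Matrix (Fin 7) (Fin 7) ℤ :=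
  Matrix.of fun i j => if i = σ j then 1 else 0

def AmatInt : Matrix (Fin 7) (Fin 7) ℤ :=
  !![1,0,0,0,0,0,0;
     0,1,0,0,0,0,0;
     0,0,-1,0,0,0,1;
     0,0,0,-1,0,0,1;
     0,0,-1,-1,1,0,1;
     0,0,-1,-1,0,1,1;
     0,0,0,0,0,0,1]

def BmatInt : Matrix (Fin 7) (Fin 7) ℤ :=
  !![-1,-1,0,-1,0,1,1;
     -1,-1,-1,0,0,1,1;
     0,-1,-1,-1,0,1,1;
     -1,0,-1,-1,0,1,1;
     -2,-2,-2,-2,1,2,2;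
     -1,-1,-1,-1,0,1,2;
     -1,-1,-1,-1,0,2,1]

lemma pm_eq_map (σ : Equiv.Perm (Fin 7)) : pm σ = (pmInt σ).map (Int.castRingHom ℂ) := by
  ext i j
  simp only [pm, pmInt, map_apply, of_apply]
  split_ifs <;> simp

lemma Amat_eq_map : Amat = AmatInt.map (Int.castRingHom ℂ) := by
  ext i j
  fin_cases i <;> fin_cases j <;> simp [Amat, AmatInt]

lemma pow_four_eq_BmatInt : (pmInt c123 * pmInt (Equiv.swap 5 6) * AmatInt) ^ 4 = BmatInt := by
  decide

lemma BmatInt_mul_self : BmatInt * BmatInt = 1 := by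
  decide

lemma Bmat_eq_map : Bmat = BmatInt.map (Int.castRingHom ℂ) := by
  rw [Bmat, pm_eq_map, pm_eq_map, Amat_eq_map, ← Matrix.map_mul, ← Matrix.map_mul, ← Matrix.map_pow,
    pow_four_eq_BmatInt]

lemma Bmat_mul_self : Bmat * Bmat = 1 := by
  rw [Bmat_eq_map, ← Matrix.map_mul, BmatInt_mul_self, Matrix.map_one _ (map_zero _) (map_one _)]

lemma Bmat_mulVec (x : Fin 7 → ℂ) :
    Bmat *ᵥ x = Tmap x + (sfun x - 1) • ![1, 1, 1, 1, 2, 1, 1] := by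
  funext i
  fin_cases i <;>
    simp [Bmat_eq_map, BmatInt, Tmap, sfun, mulVec, dotProduct, Fin.sum_univ_seven] <;> ring

/-- On the Saalschützian hyperplane, `[(123)(67)A]⁴` represents the transformation
`(a,b,c,d,e,f,g) ↦ (1+c-e,1+d-e,1+a-e,1+b-e,2-e,1+g-e,1+f-e)` up to a permutation of
the first four coordinates and of the last two; in particular its square lies in `Σ`. -/
theorem Bmat_represents :
    (∃ σ ∈ SigmaL, ∀ x : Fin 7 → ℂ, sfun x = 1 → Bmat.mulVec x = σ.mulVec (Tmap x)) ∧
    Bmat * Bmat ∈ SigmaL := by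
  refine ⟨⟨1, one_mem _, fun x hx => ?_⟩, Bmat_mul_self ▸ one_mem _⟩
  rw [Bmat_mulVec, hx, sub_self, zero_smul, add_zero, one_mulVec]
end
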